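/- Let Q be a symmetric bilinear form on a finite-dimensional real vector space V and let L : V → ℝ be a nonzero linear functional. Define the symmetric bilinear form B on V ⊕ ℝ by B((v,s),(w,t)) = Q(v,w) + s·L(w) + t·L(v). If Q restricted to ker L is nondegenerate, then B is nondegenerate and the negative index (Morse index) of B equals the negative index of Q restricted to ker L plus 1. -/

import Mathlib

/-!
A negative definite subspace of `B` meets the hyperplane `{(v, s) | L v = 0}` in codimension at
most one, and there `B (v, s) (v, s) = Q v v`; this bounds the index of `B` from above.
For the lower bound, take a maximal negative definite subspace `W ≤ ker L` of `Q`. Being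
negative definite, `W` is complementary to its orthogonal for the symmetrization `Q + Q.flip`,
so that orthogonal contains some `v` with `L v ≠ 0`; the free coordinate `s` then makes
`e = (v, s)` satisfy `B e e = -1`, and `W × 0` together with `e` spans a negative definite
subspace of dimension one more.
-/

/-- The negative index (Morse index) of a bilinear form: the maximal dimension of a
subspace on which the form is negative definite. -/
noncomputable def negIndex {V : Type*} [AddCommGroup V] [Module ℝ V]
    (B : LinearMap.BilinForm ℝ V) : ℕ :=
  sSup {n : ℕ | ∃ W : Submodule ℝ V, Module.finrank ℝ W = n ∧
    ∀ v ∈ W, v ≠ 0 → B v v < 0}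

open Module Submodule LinearMap
open LinearMap (BilinForm)

section NegIndex

variable {M N : Type*} [AddCommGroup M] [Module ℝ M] [AddCommGroup N] [Module ℝ N]

def NegDefOn (B : BilinForm ℝ M) (W : Submodule ℝ M) : Prop :=
  ∀ v ∈ W, v ≠ 0 → B v v < 0

theorem negDefOn_bot (B : BilinForm ℝ M) : NegDefOn B ⊥ :=
  fun _ hv hv0 => (hv0 ((mem_bot ℝ).1 hv)).elim

theorem NegDefOn.apply_self_nonpos {B : BilinForm ℝ M} {W : Submodule ℝ M} (hW : NegDefOn B W)
    {v : M} (hv : v ∈ W) : B v v ≤ 0 := by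
  rcases eq_or_ne v 0 with rfl | hv0
  · simp
  · exact (hW v hv hv0).le

theorem NegDefOn.map {B : BilinForm ℝ M} {B' : BilinForm ℝ N} {f : M →ₗ[ℝ] N}
    (hf : ∀ x, B' (f x) (f x) = B x x) {W : Submodule ℝ M} (hW : NegDefOn B W) :
    NegDefOn B' (W.map f) := by
  rintro _ ⟨x, hx, rfl⟩ hfx
  rw [hf]
  exact hW x hx fun hx0 => hfx (by rw [hx0, map_zero])

theorem NegDefOn.finrank_map {B : BilinForm ℝ M} {B' : BilinForm ℝ N} {f : M →ₗ[ℝ] N}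
    (hf : ∀ x, B' (f x) (f x) = B x x) {W : Submodule ℝ M} (hW : NegDefOn B W) :
    finrank ℝ (W.map f) = finrank ℝ W := by
  have hdisj : Disjoint W (ker f) := by
    refine disjoint_def.2 fun x hx hfx => ?_
    by_contra hx0
    have := hW x hx hx0
    rw [← hf, mem_ker.1 hfx, map_zero] at this
    exact lt_irrefl 0 this
  rw [← range_domRestrict, finrank_range_of_inj (injective_domRestrict_iff.2 hdisj)]

theorem NegDefOn.sup_span_singleton {B : BilinForm ℝ M} {W : Submodule ℝ M} {e : M}
    (hW : NegDefOn B W) (he : B e e < 0) (heW : e ∈ (B + B.flip).orthogonal W) :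
    NegDefOn B (W ⊔ span ℝ {e}) := by
  intro x hx hx0
  obtain ⟨w, hw, _, hy, rfl⟩ := mem_sup.1 hx
  obtain ⟨c, rfl⟩ := mem_span_singleton.1 hy
  have hcross : B w e + B e w = 0 := heW w hw
  have hexpand : B (w + c • e) (w + c • e) = B w w + c * (B w e + B e w) + c ^ 2 * B e e := by
    simp only [map_add, map_smul, LinearMap.add_apply, LinearMap.smul_apply, smul_eq_mul]
    ring
  rw [hexpand, hcross]
  rcases eq_or_ne c 0 with rfl | hc
  · simp only [zero_smul, add_zero] at hx0 ⊢
    simpa using hW w hw hx0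
  · nlinarith [hW.apply_self_nonpos hw, sq_pos_of_ne_zero hc]

theorem NegDefOn.exists_mem_orthogonal_notMem [FiniteDimensional ℝ M] {B : BilinForm ℝ M}
    {W K : Submodule ℝ M} (hW : NegDefOn B W) (hWK : W ≤ K) (hK : K ≠ ⊤) :
    ∃ v ∈ (B + B.flip).orthogonal W, v ∉ K := by
  have hrefl : (B + B.flip).IsRefl := BilinForm.IsSymm.isRefl ⟨fun x y => by simp [add_comm]⟩
  have hdisj : Disjoint W ((B + B.flip).orthogonal W) := by
    refine disjoint_def.2 fun v hv hvo => ?_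
    by_contra hv0
    have h2 : B v v + B v v = 0 := hvo v hv
    linarith [hW v hv hv0]
  have hcompl := (BilinForm.isCompl_orthogonal_iff_disjoint hrefl).2 hdisj
  by_contra! h
  exact hK (eq_top_iff.2 (hcompl.sup_eq_top ▸ sup_le hWK h))

theorem le_negIndex [FiniteDimensional ℝ M] {B : BilinForm ℝ M} {W : Submodule ℝ M}
    (hW : NegDefOn B W) : finrank ℝ W ≤ negIndex B :=
  le_csSup ⟨finrank ℝ M, fun _ ⟨U, hU, _⟩ => hU ▸ U.finrank_le⟩ ⟨W, rfl, hW⟩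

theorem exists_negDefOn_finrank_eq_negIndex [FiniteDimensional ℝ M] (B : BilinForm ℝ M) :
    ∃ W : Submodule ℝ M, NegDefOn B W ∧ finrank ℝ W = negIndex B := by
  obtain ⟨W, hW, hneg⟩ := Nat.sSup_mem (s := {n : ℕ | ∃ W : Submodule ℝ M, finrank ℝ W = n ∧
      NegDefOn B W}) ⟨0, ⊥, finrank_bot ℝ M, negDefOn_bot B⟩
    ⟨finrank ℝ M, fun _ ⟨U, hU, _⟩ => hU ▸ U.finrank_le⟩
  exact ⟨W, hneg, hW⟩

theorem negIndex_le {B : BilinForm ℝ M} {n : ℕ}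
    (h : ∀ W : Submodule ℝ M, NegDefOn B W → finrank ℝ W ≤ n) : negIndex B ≤ n :=
  csSup_le ⟨0, ⊥, finrank_bot ℝ M, negDefOn_bot B⟩ fun _ ⟨W, hW, hneg⟩ => hW ▸ h W hneg

theorem finrank_add_one_le_negIndex [FiniteDimensional ℝ M] {B : BilinForm ℝ M}
    {W : Submodule ℝ M} {e : M} (hW : NegDefOn B W) (he : B e e < 0)
    (heW : e ∈ (B + B.flip).orthogonal W) : finrank ℝ W + 1 ≤ negIndex B := by
  have he_notMem : e ∉ W := fun he_mem => by
    have h2 : B e e + B e e = 0 := heW e he_mem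
    linarith
  rw [← finrank_sup_span_singleton he_notMem]
  exact le_negIndex (hW.sup_span_singleton he heW)

theorem negIndex_le_of_apply_self_eq [FiniteDimensional ℝ N] {B : BilinForm ℝ M}
    {B' : BilinForm ℝ N} (f : M →ₗ[ℝ] N) (hf : ∀ x, B' (f x) (f x) = B x x) :
    negIndex B ≤ negIndex B' :=
  negIndex_le fun _ hW => hW.finrank_map hf ▸ le_negIndex (hW.map hf)

theorem negIndex_le_negIndex_restrict_ker_add_one [FiniteDimensional ℝ M] (B : BilinForm ℝ M)
    (f : M →ₗ[ℝ] ℝ) : negIndex B ≤ negIndex (B.restrict (ker f)) + 1 := by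
  refine negIndex_le fun W hW => ?_
  let U := W.comap (ker f).subtype
  have hU : NegDefOn (B.restrict (ker f)) U :=
    fun v hv hv0 => hW v hv fun h => hv0 (Subtype.ext h)
  have hUrank : finrank ℝ U = finrank ℝ (ker f ⊓ W : Submodule ℝ M) := by
    rw [← map_comap_subtype, finrank_map_subtype_eq]
  have hcodim : finrank ℝ M ≤ finrank ℝ (ker f) + 1 := by
    have hrank := f.finrank_range_add_finrank_ker
    have hrange := (range f).finrank_le
    rw [finrank_self] at hrange
    omega
  have hsup := finrank_sup_add_finrank_inf_eq (ker f) W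
  have hsup_le := (ker f ⊔ W).finrank_le
  have hU_le := le_negIndex hU
  omega

end NegIndex

namespace LagrangeMultiplier

variable {V : Type*} [AddCommGroup V] [Module ℝ V] [FiniteDimensional ℝ V]
  {Q : BilinForm ℝ V} {L : V →ₗ[ℝ] ℝ} {B : BilinForm ℝ (V × ℝ)}

theorem nondegenerate
    (hB : ∀ (v w : V) (s t : ℝ), B (v, s) (w, t) = Q v w + s * L w + t * L v)
    (hL : L ≠ 0) (hQnd : (Q.restrict (ker L)).Nondegenerate) : B.Nondegenerate := by
  refine .ofSeparatingLeft fun ⟨v, s⟩ h => ?_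
  have hv : L v = 0 := by simpa [hB] using h (0, 1)
  have hv0 : v = 0 := congrArg Subtype.val <| hQnd.1 ⟨v, hv⟩ fun w => by
    simpa [hB, hv, mem_ker.1 w.2] using h (w, 0)
  obtain ⟨x, hx⟩ : ∃ x, L x ≠ 0 := by
    by_contra! h
    exact hL (LinearMap.ext h)
  have hs : s = 0 := by simpa [hB, hv0, hx] using h (x, 0)
  simp [hv0, hs]

theorem negIndex_le
    (hB : ∀ (v w : V) (s t : ℝ), B (v, s) (w, t) = Q v w + s * L w + t * L v) :
    negIndex B ≤ negIndex (Q.restrict (ker L)) + 1 := by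
  have hrestrict : negIndex (B.restrict (ker (L ∘ₗ LinearMap.fst ℝ V ℝ))) ≤
      negIndex (Q.restrict (ker L)) :=
    negIndex_le_of_apply_self_eq ((LinearMap.fst ℝ V ℝ).restrict fun _ hx => hx)
      fun ⟨⟨v, s⟩, hx⟩ => by
      change Q v v = B (v, s) (v, s)
      rw [hB, show L v = 0 from hx]
      ring
  have hcodim := negIndex_le_negIndex_restrict_ker_add_one B (L ∘ₗ LinearMap.fst ℝ V ℝ)
  omega

theorem le_negIndex
    (hB : ∀ (v w : V) (s t : ℝ), B (v, s) (w, t) = Q v w + s * L w + t * L v) (hL : L ≠ 0) :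
    negIndex (Q.restrict (ker L)) + 1 ≤ negIndex B := by
  obtain ⟨W₀, hW₀, hrank⟩ := exists_negDefOn_finrank_eq_negIndex (Q.restrict (ker L))
  let W := W₀.map (ker L).subtype
  have hW : NegDefOn Q W := hW₀.map fun _ => rfl
  have hWL : W ≤ ker L := by
    rintro _ ⟨w, -, rfl⟩
    exact w.2
  obtain ⟨v, hvW, hvL⟩ := hW.exists_mem_orthogonal_notMem hWL (by rwa [Ne, ker_eq_top])
  have hv : L v ≠ 0 := hvL
  let e : V × ℝ := (v, -(Q v v + 1) / (2 * L v))
  have he : B e e = -1 := by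
    simp only [e, hB]
    field_simp
    ring
  have hinl : ∀ w, B (inl ℝ V ℝ w) (inl ℝ V ℝ w) = Q w w := fun w => by simp [hB]
  have heW : e ∈ (B + B.flip).orthogonal (W.map (inl ℝ V ℝ)) := by
    rintro _ ⟨w, hw, rfl⟩
    have hQ : Q w v + Q v w = 0 := hvW w hw
    simpa [hB, e, mem_ker.1 (hWL hw)] using hQ
  calc negIndex (Q.restrict (ker L)) + 1 = finrank ℝ (W.map (inl ℝ V ℝ)) + 1 := by
        rw [hW.finrank_map hinl, hW₀.finrank_map fun _ => rfl, hrank]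
    _ ≤ negIndex B := finrank_add_one_le_negIndex (hW.map hinl) (by rw [he]; norm_num) heW

end LagrangeMultiplier

theorem lagrange_multiplier_negIndex_general
    {V : Type*} [AddCommGroup V] [Module ℝ V] [FiniteDimensional ℝ V]
    (Q : LinearMap.BilinForm ℝ V)
    (L : V →ₗ[ℝ] ℝ) (hL : L ≠ 0)
    (B : LinearMap.BilinForm ℝ (V × ℝ))
    (hB : ∀ (v w : V) (s t : ℝ), B (v, s) (w, t) = Q v w + s * L w + t * L v)
    (hQnd : (Q.restrict (LinearMap.ker L)).Nondegenerate) :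
    B.Nondegenerate ∧ negIndex B = negIndex (Q.restrict (LinearMap.ker L)) + 1 :=
  ⟨LagrangeMultiplier.nondegenerate hB hL hQnd,
    le_antisymm (LagrangeMultiplier.negIndex_le hB) (LagrangeMultiplier.le_negIndex hB hL)⟩

/-- **Index of the Lagrange multiplier form.** Let `Q` be a symmetric bilinear form on a
finite-dimensional real vector space `V` and `L : V → ℝ` a nonzero linear functional.
Let `B` be the symmetric bilinear form on `V ⊕ ℝ` with
`B ((v,s), (w,t)) = Q v w + s • L w + t • L v`. If the restriction of `Q` to `ker L` is
nondegenerate, then `B` is nondegenerate and the negative index of `B` equals the negative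
index of `Q` restricted to `ker L`, plus one. -/
theorem lagrange_multiplier_negIndex
    {V : Type*} [AddCommGroup V] [Module ℝ V] [FiniteDimensional ℝ V]
    (Q : LinearMap.BilinForm ℝ V) (hQsymm : ∀ v w, Q v w = Q w v)
    (L : V →ₗ[ℝ] ℝ) (hL : L ≠ 0)
    (B : LinearMap.BilinForm ℝ (V × ℝ))
    (hB : ∀ (v w : V) (s t : ℝ), B (v, s) (w, t) = Q v w + s * L w + t * L v)
    (hQnd : (Q.restrict (LinearMap.ker L)).Nondegenerate) :
    B.Nondegenerate ∧ negIndex B = negIndex (Q.restrict (LinearMap.ker L)) + 1 :=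
  lagrange_multiplier_negIndex_general Q L hL B hB hQnd
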